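/- Let R, S, T be commutative Noetherian local rings with surjective ring homomorphisms α: R → T and β: S → T. Then the fiber product ring R ×_T S is Noetherian. -/
import Mathlib

/-- The fiber product `R ×_T S` of ring homomorphisms `α : R →+* T`, `β : S →+* T`,
as a subring of `R × S`. -/
def fiberProduct {R S T : Type*} [CommRing R] [CommRing S] [CommRing T]
    (α : R →+* T) (β : S →+* T) : Subring (R × S) :=
  RingHom.eqLocus (α.comp (RingHom.fst R S)) (β.comp (RingHom.snd R S))

/-- If `f : A →+* B` is surjective and `B` is a Noetherian ring, then `B` is
Noetherian as an `A`-module (for any module structure whose scalar action is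
multiplication by `f a`). -/
theorem isNoetherian_of_surjective_ringHom {A B : Type*} [CommRing A] [CommRing B]
    (f : A →+* B) (hf : Function.Surjective f) [IsNoetherianRing B] [Module A B]
    (hsmul : ∀ (a : A) (b : B), a • b = f a * b) : IsNoetherian A B := by
  rw [isNoetherian_def]
  intro N
  let I : Ideal B :=
    { carrier := N
      add_mem' := N.add_mem
      zero_mem' := N.zero_mem
      smul_mem' := by
        intro b x hx
        obtain ⟨a, rfl⟩ := hf b
        have := N.smul_mem a hx
        rwa [hsmul] at this }
  obtain ⟨s, hs⟩ := (isNoetherian_def.mp inferInstance) I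
  refine ⟨s, le_antisymm ?_ ?_⟩
  · rw [Submodule.span_le]
    intro x hx
    have : x ∈ Submodule.span B (s : Set B) := Submodule.subset_span hx
    rw [hs] at this
    exact this
  · intro x hx
    have hx' : x ∈ Submodule.span B (s : Set B) := by rw [hs]; exact hx
    let J : Ideal B :=
      { carrier := Submodule.span A (s : Set B)
        add_mem' := fun h1 h2 => Submodule.add_mem _ h1 h2
        zero_mem' := Submodule.zero_mem _
        smul_mem' := by
          intro b y hy
          obtain ⟨a, rfl⟩ := hf b
          have := Submodule.smul_mem (Submodule.span A (s : Set B)) a hy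
          rwa [hsmul] at this }
    have : Ideal.span (s : Set B) ≤ J := Ideal.span_le.mpr Submodule.subset_span
    exact this hx'

/-- If `R`, `S`, `T` are commutative Noetherian local rings and `α : R → T`,
`β : S → T` are surjective ring homomorphisms, then `R ×_T S` is Noetherian. -/
theorem stmt_1 {R S T : Type*} [CommRing R] [CommRing S] [CommRing T]
    [IsLocalRing R] [IsLocalRing S] [IsLocalRing T]
    [IsNoetherianRing R] [IsNoetherianRing S] [IsNoetherianRing T]
    (α : R →+* T) (β : S →+* T)
    (hα : Function.Surjective α) (hβ : Function.Surjective β) :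
    IsNoetherianRing (fiberProduct α β) := by
  set P := fiberProduct α β with hP
  letI : Module P (R × S) := (P.subtype).toModule
  letI : Module P R := ((RingHom.fst R S).comp P.subtype).toModule
  letI : Module P S := ((RingHom.snd R S).comp P.subtype).toModule
  have hπ1 : Function.Surjective ((RingHom.fst R S).comp P.subtype) := by
    intro r
    obtain ⟨s, hs⟩ := hβ (α r)
    exact ⟨⟨(r, s), hs.symm⟩, rfl⟩
  have hπ2 : Function.Surjective ((RingHom.snd R S).comp P.subtype) := by
    intro s
    obtain ⟨r, hr⟩ := hα (β s)
    exact ⟨⟨(r, s), hr⟩, rfl⟩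
  haveI hNR : IsNoetherian P R :=
    isNoetherian_of_surjective_ringHom _ hπ1 (fun _ _ => rfl)
  haveI hNS : IsNoetherian P S :=
    isNoetherian_of_surjective_ringHom _ hπ2 (fun _ _ => rfl)
  let ι : S →ₗ[P] R × S :=
    { toFun := fun s => (0, s)
      map_add' := by intro s t; ext <;> simp
      map_smul' := by
        intro p s
        show ((0 : R), (p : R × S).2 * s) = (p : R × S) * (0, s)
        ext <;> simp }
  let π : (R × S) →ₗ[P] R :=
    { toFun := fun x => x.1
      map_add' := fun _ _ => rfl
      map_smul' := fun _ _ => rfl }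
  have hrk : LinearMap.range ι = LinearMap.ker π := by
    ext x
    constructor
    · rintro ⟨s, rfl⟩; rfl
    · intro hx
      refine ⟨x.2, ?_⟩
      have : x.1 = 0 := hx
      ext <;> simp [ι, this]
  haveI : IsNoetherian P (R × S) := isNoetherian_of_range_eq_ker ι π hrk
  let ℓ : P →ₗ[P] R × S :=
    { toFun := fun p => (p : R × S)
      map_add' := fun _ _ => rfl
      map_smul' := fun _ _ => rfl }
  exact isNoetherianRing_iff.mpr (isNoetherian_of_injective ℓ Subtype.coe_injective)
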